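/- Suppose x, y in (0,1), and normalized confusion matrices for two groups satisfy demographic parity (TPa+FPa = TPb+FPb), equal opportunity (TPa·(1-y) = TPb·(1-x)), and false positive parity (FPa·y = FPb·x). Then either x = y, or all of the following hold: FPb = (y/(1-y))·TPb, FPa = (x/(1-y))·TPb, and TPa = ((1-x)/(1-y))·TPb. -/

import Mathlib

/-! Eliminating `TPa` and `FPa` from the three parity equations leaves
`(y - x) * (FPb * (1 - y) - y * TPb) = 0`. Off the diagonal `x = y` this pins down `FPb`, and
then equal opportunity gives `TPa` and demographic parity gives `FPa`. -/

theorem fpb_mul_one_sub_eq_of_parities {K : Type*} [Field K] {x y TPa FPa TPb FPb : K}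
    (hxy : x ≠ y) (hdp : TPa + FPa = TPb + FPb) (heo : TPa * (1 - y) = TPb * (1 - x))
    (hfpp : FPa * y = FPb * x) : FPb * (1 - y) = y * TPb := by
  have h : (y - x) * (FPb * (1 - y) - y * TPb) = 0 := by
    linear_combination y * heo + (1 - y) * hfpp - y * (1 - y) * hdp
  rcases mul_eq_zero.1 h with h | h
  · exact absurd (sub_eq_zero.1 h).symm hxy
  · exact sub_eq_zero.1 h

theorem stmt_general
    (x y TPa FPa TPb FPb : ℝ)
    (hy1 : y < 1)
    (hdp : TPa + FPa = TPb + FPb)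
    (heo : TPa * (1 - y) = TPb * (1 - x))
    (hfpp : FPa * y = FPb * x)
    : x = y ∨ (FPb = (y / (1 - y)) * TPb ∧ FPa = (x / (1 - y)) * TPb ∧ TPa = ((1 - x) / (1 - y)) * TPb) := by
  rcases eq_or_ne x y with hxy | hxy
  · exact Or.inl hxy
  have hy' : 1 - y ≠ 0 := sub_ne_zero.2 hy1.ne'
  have hFPb := fpb_mul_one_sub_eq_of_parities hxy hdp heo hfpp
  refine Or.inr ⟨?_, ?_, ?_⟩
  · field_simp
    linear_combination hFPb
  · field_simp
    linear_combination (1 - y) * hdp - heo + hFPb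
  · field_simp
    linear_combination heo

theorem stmt
    (x y TPa FNa TNa FPa TPb FNb TNb FPb : ℝ)
    (hx0 : 0 < x) (hx1 : x < 1) (hy0 : 0 < y) (hy1 : y < 1)
    (hTPa : 0 ≤ TPa) (hFNa : 0 ≤ FNa) (hTNa : 0 ≤ TNa) (hFPa : 0 ≤ FPa)
    (hTPb : 0 ≤ TPb) (hFNb : 0 ≤ FNb) (hTNb : 0 ≤ TNb) (hFPb : 0 ≤ FPb)
    (hra : TPa + FNa = 1 - x) (hra' : TNa + FPa = x)
    (hrb : TPb + FNb = 1 - y) (hrb' : TNb + FPb = y)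
    (hdp : TPa + FPa = TPb + FPb)
    (heo : TPa * (1 - y) = TPb * (1 - x))
    (hfpp : FPa * y = FPb * x)
    : x = y ∨ (FPb = (y / (1 - y)) * TPb ∧ FPa = (x / (1 - y)) * TPb ∧ TPa = ((1 - x) / (1 - y)) * TPb) :=
  stmt_general x y TPa FPa TPb FPb hy1 hdp heo hfpp
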